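/- Let n ≥ 1 and let Y_n be a minimizer of the quantization energy among subsets of Q with n points. Then for every y ∈ Y_n, the Voronoi cell V of y satisfies |V| ≥ ω₃·Γ₅³·n^{−1}, where Γ₅ := (1/4)·(√(1 + 2⁴·3³/(5²·10³)) − 1)·Γ₃, Γ₃ := ω₃^{−1/5}·Γ₁^{1/5}, and Γ₁ := (2/5)^{2/3}/40. -/

import Mathlib

open MeasureTheory

noncomputable section

/-- Euclidean 3-space. -/
abbrev E3 := EuclideanSpace ℝ (Fin 3)

/-- The closed unit cube Q = [0,1]³. -/
def Qcube : Set E3 := {x | ∀ i, x i ∈ Set.Icc (0 : ℝ) 1}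

/-- The quantization energy E(Y) = ∫_Q dist(x,Y)² dx. -/
def quantE (Y : Finset E3) : ℝ := ∫ x in Qcube, (Metric.infDist x (↑Y : Set E3)) ^ 2

/-- The Voronoi cell of a generator y ∈ Y, relative to Q. -/
def vorCell (Y : Finset E3) (y : E3) : Set E3 :=
  {x ∈ Qcube | ∀ z ∈ Y, dist x y ≤ dist x z}

/-- Y is a minimizer of the quantization energy among n-point subsets of Q. -/
def IsMinimizer (n : ℕ) (Y : Finset E3) : Prop :=
  (↑Y : Set E3) ⊆ Qcube ∧ Y.card = n ∧
    ∀ Z : Finset E3, (↑Z : Set E3) ⊆ Qcube → Z.card = n → quantE Y ≤ quantE Z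

/-- ω₃ = 4π/3, the volume of the unit ball in ℝ³. -/
def omega3 : ℝ := 4 * Real.pi / 3

/-- Γ₁ = (2/5)^{2/3} / 40. -/
def Gamma1 : ℝ := ((2 / 5 : ℝ) ^ ((2 : ℝ) / 3)) / 40

/-- Γ₃ = ω₃^{-1/5} Γ₁^{1/5}. -/
def Gamma3 : ℝ := omega3 ^ (-(1 : ℝ) / 5) * Gamma1 ^ ((1 : ℝ) / 5)

/-- Γ₅ = (1/4)(√(1 + 2⁴·3³/(5²·10³)) − 1) Γ₃. -/
def Gamma5 : ℝ :=
  (1 / 4) * (Real.sqrt (1 + (2 ^ 4 * 3 ^ 3 : ℝ) / (5 ^ 2 * 10 ^ 3)) - 1) * Gamma3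

/-- Γ₄, the diameter upper-bound constant. -/
def Gamma4 : ℝ :=
  (2 * (12 : ℝ) ^ ((1 : ℝ) / 4) * (16 : ℝ) ^ ((1 : ℝ) / 3) /
      (Real.pi ^ ((1 : ℝ) / 4) * omega3 ^ ((1 : ℝ) / 12))) *
    (Real.sqrt (1 + (2 ^ 4 * 3 ^ 3 : ℝ) / (5 ^ 2 * 10 ^ 3)) - 1) ^ (-(1 : ℝ) / 2) *
    ((5 ^ 2 * 10 ^ 3 : ℝ) / (2 ^ 2 * 3 ^ 3)) ^ ((1 : ℝ) / 4)

/-!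
Replacing a generator `y` of a minimizer by a point `w ∈ Q` at distance at least `r` from the
generators cannot lower the energy. Removing `y` costs at most `M² |V_y|`, where `M` bounds the
distance from `V_y` to the other generators; adding `w` gains at least `r⁵/512`, on a cube of side
`r/4` next to `w` inside `Q`. If `R` is the covering radius of `Y`, every generator has another one
within `2R`, so `M ≤ 3R` works for every cell. With `m = n^{-1/3}`, applying the swap at a cell of
volume at most `1/n` with `w` a farthest point of `Q` gives `R ≤ 17m`; applying it at an arbitrary
cell with `w` at distance `9m/20` from `Y` (such a point exists, since `n` cubes of side `9m/10`
cannot cover `Q`) and `M = 51m` gives `|V_y| ≥ (9m/20)⁵ / (512 · 51² m²) = c/n`, and `c ≥ ω₃ Γ₅³`.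
-/

open Metric

section ClosedCube

variable {ι : Type*}

def closedCube (lo : ι → ℝ) (a : ℝ) : Set (EuclideanSpace ℝ ι) :=
  {x | ∀ i, x i ∈ Set.Icc (lo i) (lo i + a)}

theorem isClosed_closedCube (lo : ι → ℝ) (a : ℝ) : IsClosed (closedCube lo a) := by
  simp only [closedCube, Set.ofPred_forall]
  exact isClosed_iInter fun i => isClosed_Icc.preimage (EuclideanSpace.proj i).continuous

variable [Fintype ι]

theorem volume_closedCube (lo : ι → ℝ) {a : ℝ} (ha : 0 ≤ a) :
    volume (closedCube lo a) = ENNReal.ofReal (a ^ Fintype.card ι) := by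
  have hpre : closedCube lo a = (MeasurableEquiv.toLp 2 (ι → ℝ)).symm ⁻¹'
      Set.univ.pi fun i => Set.Icc (lo i) (lo i + a) := by
    ext x
    simp only [closedCube, Set.mem_ofPred_eq, Set.mem_preimage, Set.mem_univ_pi]
    rfl
  rw [hpre, (EuclideanSpace.volume_preserving_symm_measurableEquiv_toLp ι).measure_preimage
    (MeasurableSet.univ_pi fun _ => measurableSet_Icc).nullMeasurableSet, volume_pi_pi]
  simp only [Real.volume_Icc, add_sub_cancel_left, Finset.prod_const, Finset.card_univ,
    ENNReal.ofReal_pow ha]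

theorem dist_le_of_mem_closedCube {lo : ι → ℝ} {a : ℝ} (ha : 0 ≤ a)
    {x y : EuclideanSpace ℝ ι} (hx : x ∈ closedCube lo a) (hy : y ∈ closedCube lo a) :
    dist x y ≤ √(Fintype.card ι) * a := by
  have hcoord : ∀ i, dist (x i) (y i) ^ 2 ≤ a ^ 2 := fun i => by
    have hxi := hx i
    have hyi := hy i
    rw [Set.mem_Icc] at hxi hyi
    rw [Real.dist_eq, sq_abs]
    nlinarith
  calc dist x y = √(∑ i, dist (x i) (y i) ^ 2) := EuclideanSpace.dist_eq x y
    _ ≤ √(Fintype.card ι * a ^ 2) := by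
      gcongr
      simpa using Finset.sum_le_sum fun i (_ : i ∈ Finset.univ) => hcoord i
    _ = √(Fintype.card ι) * a := by rw [Real.sqrt_mul (Nat.cast_nonneg _), Real.sqrt_sq ha]

end ClosedCube

theorem Qcube_eq_closedCube : Qcube = closedCube 0 1 := by
  ext x
  simp [Qcube, closedCube]

theorem volume_Qcube : volume Qcube = 1 := by
  simp [Qcube_eq_closedCube, volume_closedCube _ zero_le_one]

theorem dist_le_sqrt_three_of_mem_Qcube {x y : E3} (hx : x ∈ Qcube) (hy : y ∈ Qcube) :
    dist x y ≤ √3 := by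
  rw [Qcube_eq_closedCube] at hx hy
  simpa using dist_le_of_mem_closedCube zero_le_one hx hy

theorem isCompact_Qcube : IsCompact Qcube := by
  refine isCompact_of_isClosed_isBounded ?_ (isBounded_iff.2 ⟨√3, fun x hx y hy =>
    dist_le_sqrt_three_of_mem_Qcube hx hy⟩)
  rw [Qcube_eq_closedCube]
  exact isClosed_closedCube 0 1

theorem measurableSet_Qcube : MeasurableSet Qcube :=
  isCompact_Qcube.isClosed.measurableSet

theorem convex_Qcube : Convex ℝ Qcube := by
  intro x hx z hz a b ha hb hab i
  have hxi := hx i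
  have hzi := hz i
  simp only [PiLp.add_apply, PiLp.smul_apply, smul_eq_mul, Set.mem_Icc] at hxi hzi ⊢
  constructor <;> nlinarith

theorem exists_closedCube_subset_Qcube {w : E3} (hw : w ∈ Qcube) {a : ℝ} (ha0 : 0 ≤ a)
    (ha : a ≤ 1 / 2) : ∃ lo, w ∈ closedCube lo a ∧ closedCube lo a ⊆ Qcube := by
  refine ⟨fun i => if w i ≤ 1 / 2 then w i else w i - a, fun i => ?_, fun x hx i => ?_⟩
  · have hwi := hw i
    simp only [Set.mem_Icc] at hwi ⊢
    split_ifs <;> constructor <;> linarith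
  · have hwi := hw i
    have hxi := hx i
    simp only [Set.mem_Icc] at hwi hxi ⊢
    split_ifs at hxi <;> constructor <;> linarith

theorem exists_mem_Qcube_dist_eq {y : E3} (hy : y ∈ Qcube) {s : ℝ} (hs0 : 0 ≤ s)
    (hs : s ≤ √3 / 2) : ∃ p ∈ Qcube, dist p y = s := by
  set c : E3 := WithLp.toLp 2 fun i => if y i ≤ 1 / 2 then 1 else 0
  have hc : c ∈ Qcube := fun i => by
    simp only [c, Set.mem_Icc]
    split_ifs <;> norm_num
  have hcoord : ∀ i, 1 / 2 ≤ dist (c i) (y i) := fun i => by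
    have hyi := hy i
    simp only [c, Set.mem_Icc, Real.dist_eq] at hyi ⊢
    split_ifs with h
    · rw [abs_of_nonneg (by linarith)]; linarith
    · rw [abs_of_nonpos (by linarith)]; linarith
  have hcy : √3 / 2 ≤ dist c y := by
    rw [EuclideanSpace.dist_eq]
    refine Real.le_sqrt_of_sq_le ?_
    rw [div_pow, Real.sq_sqrt zero_le_three, Fin.sum_univ_three]
    nlinarith [hcoord 0, hcoord 1, hcoord 2]
  obtain ⟨p, hp, hps⟩ := convex_Qcube.isPreconnected.intermediate_value (f := fun p => dist p y)
    hy hc (continuous_id.dist continuous_const).continuousOn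
    ⟨by simpa using hs0, hs.trans hcy⟩
  exact ⟨p, hp, hps⟩

theorem Finset.Nonempty.exists_infDist_eq_dist {α : Type*} [PseudoMetricSpace α] {W : Finset α}
    (hW : W.Nonempty) (x : α) : ∃ z ∈ W, infDist x (W : Set α) = dist x z :=
  W.finite_toSet.isCompact.exists_infDist_eq_dist (Finset.coe_nonempty.2 hW) x

section Voronoi

variable {Y : Finset E3} {x y : E3}

theorem isClosed_vorCell (Y : Finset E3) (y : E3) : IsClosed (vorCell Y y) := by
  have h : vorCell Y y = Qcube ∩ ⋂ z ∈ Y, {x | dist x y ≤ dist x z} := by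
    ext x
    simp [vorCell]
  rw [h]
  exact isCompact_Qcube.isClosed.inter (isClosed_biInter fun z _ =>
    isClosed_le (continuous_id.dist continuous_const) (continuous_id.dist continuous_const))

theorem vorCell_subset_Qcube (Y : Finset E3) (y : E3) : vorCell Y y ⊆ Qcube := fun _ hx => hx.1

theorem vorCell_singleton (y : E3) : vorCell {y} y = Qcube := by
  ext x
  simp [vorCell]

theorem infDist_eq_dist_of_mem_vorCell (hy : y ∈ Y) (hx : x ∈ vorCell Y y) :
    infDist x (Y : Set E3) = dist x y :=
  le_antisymm (infDist_le_dist_of_mem (Finset.mem_coe.2 hy))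
    ((le_infDist ⟨y, hy⟩).2 fun z hz => hx.2 z hz)

theorem infDist_erase_eq_of_notMem_vorCell (hxQ : x ∈ Qcube) (hx : x ∉ vorCell Y y) :
    infDist x (Y.erase y : Set E3) = infDist x (Y : Set E3) := by
  have hY : Y.Nonempty := Finset.nonempty_iff_ne_empty.2 fun h => hx ⟨hxQ, by simp [h]⟩
  obtain ⟨z, hz, hxz⟩ := hY.exists_infDist_eq_dist x
  have hzy : z ≠ y := by
    rintro rfl
    exact hx ⟨hxQ, fun z' hz' => hxz ▸ infDist_le_dist_of_mem (Finset.mem_coe.2 hz')⟩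
  have hz' : z ∈ Y.erase y := Finset.mem_erase.2 ⟨hzy, hz⟩
  refine le_antisymm (hxz ▸ infDist_le_dist_of_mem (Finset.mem_coe.2 hz')) ?_
  exact infDist_le_infDist_of_subset (by simp) ⟨z, hz'⟩

theorem aedisjoint_vorCell {a b : E3} (ha : a ∈ Y) (hb : b ∈ Y) (hab : a ≠ b) :
    AEDisjoint volume (vorCell Y a) (vorCell Y b) := by
  refine measure_mono_null (t := AffineSubspace.perpBisector a b) ?_
    (Measure.addHaar_affineSubspace volume _ (by simpa using hab))
  rintro x ⟨hxa, hxb⟩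
  rw [SetLike.mem_coe, AffineSubspace.mem_perpBisector_iff_dist_eq]
  exact le_antisymm (hxa.2 b hb) (hxb.2 a ha)

theorem exists_volume_vorCell_le (hY : Y.Nonempty) :
    ∃ y ∈ Y, volume.real (vorCell Y y) ≤ (Y.card : ℝ)⁻¹ := by
  have hsum : ∑ y ∈ Y, volume.real (vorCell Y y) ≤ 1 := by
    rw [← measureReal_biUnion_finset₀ (fun a ha b hb hab => aedisjoint_vorCell ha hb hab)
      (fun y _ => (isClosed_vorCell Y y).measurableSet.nullMeasurableSet)
      fun y _ => ne_top_of_le_ne_top (by simp [volume_Qcube]) (measure_mono (vorCell_subset_Qcube Y y))]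
    calc volume.real (⋃ y ∈ Y, vorCell Y y) ≤ volume.real Qcube :=
          measureReal_mono (Set.iUnion₂_subset fun y _ => vorCell_subset_Qcube Y y)
            (by simp [volume_Qcube])
      _ = 1 := by simp [measureReal_def, volume_Qcube]
  refine Finset.exists_le_of_sum_le hY ?_
  rw [Finset.sum_const, nsmul_eq_mul, mul_inv_cancel₀ (by simpa using hY.ne_empty)]
  exact hsum

end Voronoi

theorem setIntegral_le_add_mul_measureReal {α : Type*} [MeasurableSpace α] {μ : Measure α}
    {K S : Set α} {f g : α → ℝ} {c : ℝ} (hK : MeasurableSet K) (hS : MeasurableSet S)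
    (hSK : S ⊆ K) (hKμ : μ K ≠ ⊤) (hf : IntegrableOn f K μ) (hg : IntegrableOn g K μ)
    (hfg : ∀ x ∈ K, f x ≤ g x + S.indicator (fun _ => c) x) :
    ∫ x in K, f x ∂μ ≤ ∫ x in K, g x ∂μ + c * μ.real S := by
  have hc : IntegrableOn (S.indicator fun _ => c) K μ := (integrableOn_const hKμ).indicator hS
  calc ∫ x in K, f x ∂μ ≤ ∫ x in K, (g x + S.indicator (fun _ => c) x) ∂μ :=
        setIntegral_mono_on hf (hg.add hc) hK hfg
    _ = ∫ x in K, g x ∂μ + c * μ.real S := by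
      rw [integral_add hg hc, integral_indicator hS, setIntegral_const,
        measureReal_restrict_apply hS, Set.inter_eq_left.2 hSK, smul_eq_mul, mul_comm]

theorem integrableOn_infDist_sq (s : Set E3) :
    IntegrableOn (fun x => infDist x s ^ 2) Qcube :=
  ((continuous_infDist_pt s).pow 2).continuousOn.integrableOn_compact isCompact_Qcube

theorem quantE_le_add_mul_volume {Y Z : Finset E3} {S : Set E3} {c : ℝ} (hS : MeasurableSet S)
    (hSQ : S ⊆ Qcube)
    (h : ∀ x ∈ Qcube, infDist x (Z : Set E3) ^ 2 ≤ infDist x (Y : Set E3) ^ 2 +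
      S.indicator (fun _ => c) x) :
    quantE Z ≤ quantE Y + c * volume.real S :=
  setIntegral_le_add_mul_measureReal measurableSet_Qcube hS hSQ (by simp [volume_Qcube])
    (integrableOn_infDist_sq _) (integrableOn_infDist_sq _) h

theorem quantE_erase_le {Y : Finset E3} {y : E3} {M : ℝ}
    (hM : ∀ x ∈ vorCell Y y, infDist x (Y.erase y : Set E3) ≤ M) :
    quantE (Y.erase y) ≤ quantE Y + M ^ 2 * volume.real (vorCell Y y) := by
  refine quantE_le_add_mul_volume (isClosed_vorCell Y y).measurableSet (vorCell_subset_Qcube Y y)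
    fun x hxQ => ?_
  by_cases hx : x ∈ vorCell Y y
  · rw [Set.indicator_of_mem hx]
    nlinarith [pow_le_pow_left₀ infDist_nonneg (hM x hx) 2, sq_nonneg (infDist x (Y : Set E3))]
  · rw [Set.indicator_of_notMem hx, infDist_erase_eq_of_notMem_vorCell hxQ hx, add_zero]

theorem quantE_insert_le {W : Finset E3} {w : E3} {t : ℝ} (hw : w ∈ Qcube) (ht0 : 0 < t)
    (ht2 : t ≤ 2) (htw : t ≤ infDist w (W : Set E3)) :
    quantE (insert w W) ≤ quantE W - t ^ 5 / 512 := by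
  have hW : (W : Set E3).Nonempty := Set.nonempty_iff_ne_empty.2 fun h => by
    rw [h, infDist_empty] at htw
    linarith
  obtain ⟨lo, hw_lo, hlo⟩ := exists_closedCube_subset_Qcube hw (by positivity : 0 ≤ t / 4)
    (by linarith)
  have hgain := quantE_le_add_mul_volume (Y := W) (Z := insert w W) (c := -(t ^ 2 / 8))
    (isClosed_closedCube lo (t / 4)).measurableSet hlo fun x _ => ?_
  · rw [measureReal_def, volume_closedCube lo (by positivity), ENNReal.toReal_ofReal (by positivity),
      Fintype.card_fin] at hgain
    linarith [show -(t ^ 2 / 8) * (t / 4) ^ 3 = -(t ^ 5 / 512) by ring]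
  by_cases hx : x ∈ closedCube lo (t / 4)
  · rw [Set.indicator_of_mem hx]
    -- the gain `t²/8` is `((9/16)² - (7/16)²) t²`
    have hxw : dist x w ≤ 7 / 16 * t := by
      have hsqrt : √3 ≤ 7 / 4 := Real.sqrt_le_iff.2 ⟨by norm_num, by norm_num⟩
      have := dist_le_of_mem_closedCube (by positivity) hx hw_lo
      simp only [Fintype.card_fin, Nat.cast_ofNat] at this
      nlinarith
    have hnear : infDist x ((insert w W : Finset E3) : Set E3) ≤ 7 / 16 * t :=
      (infDist_le_dist_of_mem (by simp)).trans hxw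
    have hfar : 9 / 16 * t ≤ infDist x (W : Set E3) := by
      linarith [infDist_le_infDist_add_dist (x := w) (y := x) (s := (W : Set E3)), dist_comm w x]
    nlinarith [pow_le_pow_left₀ infDist_nonneg hnear 2,
      pow_le_pow_left₀ (by positivity) hfar 2]
  · rw [Set.indicator_of_notMem hx, add_zero]
    exact pow_le_pow_left₀ infDist_nonneg
      (infDist_le_infDist_of_subset (by simp [Set.subset_insert]) hW) 2

theorem IsMinimizer.pow_five_le_mul_volume_vorCell {n : ℕ} {Y : Finset E3}
    (hY : IsMinimizer n Y) (hYn : Y.Nontrivial) {y w : E3} {r M : ℝ} (hy : y ∈ Y)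
    (hw : w ∈ Qcube) (hr : 0 < r) (hrw : r ≤ infDist w (Y : Set E3))
    (hM : ∀ x ∈ vorCell Y y, infDist x (Y.erase y : Set E3) ≤ M) :
    r ^ 5 / 512 ≤ M ^ 2 * volume.real (vorCell Y y) := by
  obtain ⟨hYQ, hcard, hmin⟩ := hY
  have hne : (Y.erase y).Nonempty := hYn.erase_nonempty
  have hwY : w ∉ Y.erase y := fun hw' => by
    rw [infDist_zero_of_mem (Finset.mem_coe.2 (Finset.mem_of_mem_erase hw'))] at hrw
    linarith
  have hZcard : (insert w (Y.erase y)).card = n := by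
    rw [Finset.card_insert_of_notMem hwY, Finset.card_erase_of_mem hy, ← hcard]
    have := hYn.nonempty.card_pos
    omega
  have hZQ : ((insert w (Y.erase y) : Finset E3) : Set E3) ⊆ Qcube := by
    rw [Finset.coe_insert]
    exact Set.insert_subset hw ((Finset.coe_subset.2 (Finset.erase_subset y Y)).trans hYQ)
  have hr2 : r ≤ 2 := calc
    r ≤ dist w y := hrw.trans (infDist_le_dist_of_mem (Finset.mem_coe.2 hy))
    _ ≤ √3 := dist_le_sqrt_three_of_mem_Qcube hw (hYQ hy)
    _ ≤ 2 := Real.sqrt_le_iff.2 ⟨by norm_num, by norm_num⟩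
  have hrw' : r ≤ infDist w (Y.erase y : Set E3) :=
    hrw.trans (infDist_le_infDist_of_subset (by simp) (Finset.coe_nonempty.2 hne))
  linarith [hmin _ hZQ hZcard, quantE_insert_le hw hr hr2 hrw', quantE_erase_le hM]

theorem exists_le_infDist_of_card_mul_lt {Y : Finset E3} (hY : Y.Nonempty) {r : ℝ} (hr : 0 < r)
    (hcov : Y.card * (2 * r) ^ 3 < 1) : ∃ x ∈ Qcube, r ≤ infDist x (Y : Set E3) := by
  by_contra! hfar
  have hsub : Qcube ⊆ ⋃ z ∈ Y, closedCube (fun i => z i - r) (2 * r) := by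
    intro x hx
    obtain ⟨z, hz, hxz⟩ := hY.exists_infDist_eq_dist x
    refine Set.mem_biUnion hz fun i => ?_
    have hxzi := (PiLp.dist_apply_le x z i).trans (hxz ▸ hfar x hx).le
    rw [Real.dist_eq, abs_le] at hxzi
    constructor <;> linarith [hxzi.1, hxzi.2]
  have hvol : (1 : ENNReal) ≤ Y.card * ENNReal.ofReal ((2 * r) ^ 3) := calc
    1 = volume Qcube := volume_Qcube.symm
    _ ≤ volume (⋃ z ∈ Y, closedCube (fun i => z i - r) (2 * r)) := measure_mono hsub
    _ ≤ ∑ z ∈ Y, volume (closedCube (fun i => z i - r) (2 * r)) := measure_biUnion_finset_le Y _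
    _ = Y.card * ENNReal.ofReal ((2 * r) ^ 3) := by
      simp [volume_closedCube _ (by positivity : 0 ≤ 2 * r)]
  rw [← ENNReal.ofReal_natCast, ← ENNReal.ofReal_mul (by positivity), ENNReal.one_le_ofReal] at hvol
  linarith

section CoveringRadius

variable {Y : Finset E3} {y : E3} {R : ℝ}

theorem infDist_erase_le_two_mul (hYQ : (Y : Set E3) ⊆ Qcube) (hYn : Y.Nontrivial) (hy : y ∈ Y)
    (hR : ∀ x ∈ Qcube, infDist x (Y : Set E3) ≤ R) :
    infDist y (Y.erase y : Set E3) ≤ 2 * R := by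
  have hyQ : y ∈ Qcube := hYQ hy
  have hR0 : 0 ≤ R := (infDist_zero_of_mem (Finset.mem_coe.2 hy)).symm.le.trans (hR y hyQ)
  obtain ⟨z₀, hz₀⟩ := hYn.erase_nonempty (a := y)
  rcases le_or_gt (√3 / 2) R with hRbig | hRsmall
  · calc infDist y (Y.erase y : Set E3) ≤ dist y z₀ := infDist_le_dist_of_mem hz₀
      _ ≤ √3 := dist_le_sqrt_three_of_mem_Qcube hyQ (hYQ (Finset.mem_of_mem_erase hz₀))
      _ ≤ 2 * R := by linarith
  -- a point of `Q` at distance just over `R` from `y` is within `R` of another generator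
  refine le_of_forall_pos_le_add fun ε hε => ?_
  obtain ⟨p, hpQ, hpy⟩ := exists_mem_Qcube_dist_eq hyQ (s := min (R + ε) (√3 / 2))
    (le_min (by linarith) (by positivity)) (min_le_right _ _)
  obtain ⟨z, hz, hpz⟩ := hYn.nonempty.exists_infDist_eq_dist p
  have hpzR : dist p z ≤ R := hpz ▸ hR p hpQ
  have hzy : z ≠ y := by
    rintro rfl
    linarith [lt_min (by linarith : R < R + ε) hRsmall]
  calc infDist y (Y.erase y : Set E3) ≤ dist y z :=
        infDist_le_dist_of_mem (Finset.mem_coe.2 (Finset.mem_erase.2 ⟨hzy, hz⟩))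
    _ ≤ dist y p + dist p z := dist_triangle y p z
    _ ≤ (R + ε) + R := by
      rw [dist_comm y p, hpy]
      exact add_le_add (min_le_left _ _) hpzR
    _ = 2 * R + ε := by ring

theorem infDist_erase_le_three_mul_of_mem_vorCell (hYQ : (Y : Set E3) ⊆ Qcube)
    (hYn : Y.Nontrivial) (hy : y ∈ Y) (hR : ∀ x ∈ Qcube, infDist x (Y : Set E3) ≤ R) {x : E3}
    (hx : x ∈ vorCell Y y) : infDist x (Y.erase y : Set E3) ≤ 3 * R := by
  obtain ⟨z, hz, hyz⟩ := hYn.erase_nonempty.exists_infDist_eq_dist y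
  calc infDist x (Y.erase y : Set E3) ≤ dist x z := infDist_le_dist_of_mem hz
    _ ≤ dist x y + dist y z := dist_triangle x y z
    _ ≤ R + 2 * R := by
      rw [← infDist_eq_dist_of_mem_vorCell hy hx, ← hyz]
      exact add_le_add (hR x hx.1) (infDist_erase_le_two_mul hYQ hYn hy hR)
    _ = 3 * R := by ring

end CoveringRadius

section Minimizer

variable {n : ℕ} {Y : Finset E3} {m : ℝ}

theorem IsMinimizer.infDist_le (hY : IsMinimizer n Y) (hYn : Y.Nontrivial) (hm : 0 < m)
    (hm3 : m ^ 3 = (n : ℝ)⁻¹) : ∀ x ∈ Qcube, infDist x (Y : Set E3) ≤ 17 * m := by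
  obtain ⟨y₀, hy₀⟩ := hYn.nonempty
  obtain ⟨xs, hxsQ, hxs⟩ := isCompact_Qcube.exists_isMaxOn ⟨y₀, hY.1 hy₀⟩
    (continuous_infDist_pt (Y : Set E3)).continuousOn
  set R := infDist xs (Y : Set E3)
  have hR : ∀ x ∈ Qcube, infDist x (Y : Set E3) ≤ R := fun x hx => hxs hx
  suffices R ≤ 17 * m from fun x hx => (hR x hx).trans this
  rcases le_or_gt R 0 with hR0 | hR0
  · linarith
  obtain ⟨y, hy, hvol⟩ := exists_volume_vorCell_le hYn.nonempty
  rw [hY.2.1, ← hm3] at hvol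
  have hswap := hY.pow_five_le_mul_volume_vorCell hYn hy hxsQ hR0 le_rfl
    fun x hx => infDist_erase_le_three_mul_of_mem_vorCell hY.1 hYn hy hR hx
  have hR3 : R ^ 3 * R ^ 2 ≤ (17 * m) ^ 3 * R ^ 2 := by
    linarith [mul_le_mul_of_nonneg_left hvol (sq_nonneg (3 * R)),
      (by positivity : (0 : ℝ) ≤ m ^ 3 * R ^ 2)]
  exact le_of_pow_le_pow_left₀ three_ne_zero (by positivity)
    (le_of_mul_le_mul_right hR3 (by positivity))

theorem IsMinimizer.le_volume_vorCell (hY : IsMinimizer n Y) (hYn : Y.Nontrivial) {y : E3}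
    (hy : y ∈ Y) : (9 / 20) ^ 5 / 1331712 * (n : ℝ)⁻¹ ≤ volume.real (vorCell Y y) := by
  have hn : (0 : ℝ) < n := by
    rw [← hY.2.1]
    exact_mod_cast hYn.nonempty.card_pos
  set m := (n : ℝ)⁻¹ ^ ((3 : ℕ)⁻¹ : ℝ)
  have hm : 0 < m := by positivity
  have hm3 : m ^ 3 = (n : ℝ)⁻¹ := Real.rpow_inv_natCast_pow (by positivity) three_ne_zero
  obtain ⟨w, hwQ, hw⟩ := exists_le_infDist_of_card_mul_lt hYn.nonempty (r := 9 / 20 * m)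
    (by positivity) (by
      rw [hY.2.1, show (n : ℝ) * (2 * (9 / 20 * m)) ^ 3 = 729 / 1000 * (n * m ^ 3) by ring, hm3,
        mul_inv_cancel₀ hn.ne']
      norm_num)
  have hswap := hY.pow_five_le_mul_volume_vorCell hYn hy hwQ (by positivity) hw
    fun x hx => infDist_erase_le_three_mul_of_mem_vorCell hY.1 hYn hy (hY.infDist_le hYn hm hm3) hx
  have hv : (9 / 20) ^ 5 / 1331712 * m ^ 3 * m ^ 2 ≤ volume.real (vorCell Y y) * m ^ 2 := by
    linarith [show (9 / 20 * m) ^ 5 / 512 = (9 / 20) ^ 5 / 512 * m ^ 3 * m ^ 2 by ring,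
      show (3 * (17 * m)) ^ 2 = 2601 * m ^ 2 by ring]
  rw [← hm3]
  exact le_of_mul_le_mul_right hv (by positivity)

end Minimizer

theorem omega3_le : omega3 ≤ 21 / 5 := by
  rw [omega3]
  linarith [Real.pi_lt_d2]

theorem Gamma3_le : Gamma3 ≤ 1 / 2 := by
  have hω : omega3 ^ (-(1 : ℝ) / 5) ≤ 1 :=
    Real.rpow_le_one_of_one_le_of_nonpos (by rw [omega3]; linarith [Real.pi_gt_three])
      (by norm_num)
  have hΓ₁ : Gamma1 ≤ (1 / 2) ^ 5 := by
    rw [Gamma1]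
    linarith [Real.rpow_le_one (by norm_num : (0 : ℝ) ≤ 2 / 5) (by norm_num)
      (by norm_num : (0 : ℝ) ≤ 2 / 3)]
  have hΓ₁' : Gamma1 ^ ((1 : ℝ) / 5) ≤ 1 / 2 := by
    calc Gamma1 ^ ((1 : ℝ) / 5) ≤ ((1 / 2) ^ 5) ^ ((5 : ℕ)⁻¹ : ℝ) := by
          rw [one_div, ← Nat.cast_ofNat (R := ℝ) (n := 5)]
          exact Real.rpow_le_rpow (by rw [Gamma1]; positivity) hΓ₁ (by positivity)
      _ = 1 / 2 := Real.pow_rpow_inv_natCast (by norm_num) (by norm_num)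
  rw [Gamma3]
  calc omega3 ^ (-(1 : ℝ) / 5) * Gamma1 ^ ((1 : ℝ) / 5) ≤ 1 * (1 / 2) :=
        mul_le_mul hω hΓ₁' (by rw [Gamma1]; positivity) zero_le_one
    _ = 1 / 2 := one_mul _

theorem omega3_mul_Gamma5_pow_three_le : omega3 * Gamma5 ^ 3 ≤ (9 / 20) ^ 5 / 1331712 := by
  have hsqrt : (2 ^ 4 * 3 ^ 3 : ℝ) / (5 ^ 2 * 10 ^ 3) = 54 / 3125 := by norm_num
  have hs1 : 1 ≤ √(1 + (2 ^ 4 * 3 ^ 3 : ℝ) / (5 ^ 2 * 10 ^ 3)) := by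
    rw [hsqrt, Real.one_le_sqrt]
    norm_num
  have hs2 : √(1 + (2 ^ 4 * 3 ^ 3 : ℝ) / (5 ^ 2 * 10 ^ 3)) ≤ 1 + 27 / 3125 := by
    rw [hsqrt, Real.sqrt_le_left (by norm_num)]
    norm_num
  have hΓ₃ : 0 ≤ Gamma3 := by rw [Gamma3, omega3, Gamma1]; positivity
  have hΓ₅ : 0 ≤ Gamma5 := by
    rw [Gamma5]
    exact mul_nonneg (by linarith) hΓ₃
  have hΓ₅' : Gamma5 ≤ 27 / 25000 := by
    rw [Gamma5]
    nlinarith [Gamma3_le]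
  have hω : 0 ≤ omega3 := by rw [omega3]; positivity
  calc omega3 * Gamma5 ^ 3 ≤ 21 / 5 * (27 / 25000) ^ 3 :=
        mul_le_mul omega3_le (pow_le_pow_left₀ hΓ₅ hΓ₅' 3) (by positivity) (by norm_num)
    _ ≤ (9 / 20) ^ 5 / 1331712 := by norm_num

theorem stmt_4_general (n : ℕ) (Y : Finset E3) (hY : IsMinimizer n Y)
    (y : E3) (hyY : y ∈ Y) :
    (volume (vorCell Y y)).toReal ≥ omega3 * Gamma5 ^ 3 * (n : ℝ)⁻¹ := by
  have hc := omega3_mul_Gamma5_pow_three_le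
  rcases Finset.eq_singleton_or_nontrivial hyY with rfl | hYn
  · have hn : n = 1 := by rw [← hY.2.1, Finset.card_singleton]
    rw [vorCell_singleton, volume_Qcube, hn]
    norm_num at hc ⊢
    linarith
  · calc omega3 * Gamma5 ^ 3 * (n : ℝ)⁻¹ ≤ (9 / 20) ^ 5 / 1331712 * (n : ℝ)⁻¹ := by gcongr
      _ ≤ volume.real (vorCell Y y) := hY.le_volume_vorCell hYn hyY

theorem stmt_4 (n : ℕ) (hn : 1 ≤ n) (Y : Finset E3) (hY : IsMinimizer n Y)
    (y : E3) (hyY : y ∈ Y) :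
    (volume (vorCell Y y)).toReal ≥ omega3 * Gamma5 ^ 3 * (n : ℝ)⁻¹ :=
  stmt_4_general n Y hY y hyY
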